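/- arXiv:1403.7068 — 5 statements merged into one kernel-verified Lean document; each statement's English description precedes it below -/
import Mathlib

section
/- Let ν be a symmetric measure on ℝ with ∫ y² ν(dy) < ∞ and ∫ y⁴ ν(dy) < ∞, let η, φ > 0 and γ ∈ ℝ, and define Ψ(u) := −η u + ∫ ((1 + φ (|y| − γ y)²)^u − 1) ν(dy) for u = 1, 2. Then the following two identities hold: Ψ(1) = −η + φ (1 + γ²) ∫ y² ν(dy), and Ψ(2) = 2Ψ(1) + φ² (1 + 6γ² + γ⁴) ∫ y⁴ ν(dy). -/
/-!
With `h(y) = (|y| - γ y)²` one has `(1 + φ h)¹ - 1 = φ h` and `(1 + φ h)² - 1 = 2 φ h + φ² h²`,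
so `Ψ(1) = -η + φ ∫ h` and `Ψ(2) - 2 Ψ(1) = φ² ∫ h²`. Expanding,
`h(y) = (1 + γ²) y² - 2γ |y| y` and `h(y)² = (1 + 6γ² + γ⁴) y⁴ - 4γ (1 + γ²) |y| y³`;
the terms carrying `|y|` are odd, hence integrate to zero against a symmetric measure.
-/

open MeasureTheory

section NegInvariant

variable {G E : Type*} [MeasurableSpace G] [AddGroup G] [MeasurableNeg G]
  [NormedAddCommGroup E] [NormedSpace ℝ E] (μ : Measure G) [μ.IsNegInvariant]

theorem integral_eq_zero_of_odd {f : G → E} (hf : ∀ x, f (-x) = -f x) : ∫ x, f x ∂μ = 0 := by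
  have h := integral_neg_eq_self f μ
  simp only [hf, integral_neg] at h
  have h2 : (2 : ℝ) • ∫ x, f x ∂μ = 0 := by
    rw [two_smul]; nth_rw 1 [← h]; exact neg_add_cancel _
  exact (smul_eq_zero.mp h2).resolve_left two_ne_zero

theorem integral_sub_of_odd {f g : G → E} (hf : Integrable f μ) (hg : Integrable g μ)
    (hg_odd : ∀ x, g (-x) = -g x) : ∫ x, f x - g x ∂μ = ∫ x, f x ∂μ := by
  rw [integral_sub hf hg, integral_eq_zero_of_odd μ hg_odd, sub_zero]

end NegInvariant

theorem MeasureTheory.Integrable.abs_mul_pow {μ : Measure ℝ} {n : ℕ}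
    (h : Integrable (fun y => y ^ (n + 1)) μ) : Integrable (fun y => |y| * y ^ n) μ := by
  refine h.mono (by fun_prop) (Filter.Eventually.of_forall fun y => ?_)
  simp only [Real.norm_eq_abs, abs_mul, abs_abs, abs_pow, pow_succ]
  rw [mul_comm]

section AsymmetricPower

variable (γ : ℝ)

theorem abs_sub_mul_sq_eq (y : ℝ) :
    (|y| - γ * y) ^ 2 = (1 + γ ^ 2) * y ^ 2 - 2 * γ * (|y| * y) := by
  linear_combination sq_abs y

theorem abs_sub_mul_sq_sq_eq (y : ℝ) :
    ((|y| - γ * y) ^ 2) ^ 2 = (1 + 6 * γ ^ 2 + γ ^ 4) * y ^ 4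
      - 4 * γ * (1 + γ ^ 2) * (|y| * y ^ 3) := by
  have hcube : |y| ^ 3 * y = |y| * y ^ 3 := by
    rcases abs_choice y with h | h <;> rw [h] <;> ring
  linear_combination (|y| ^ 2 + y ^ 2 + 6 * γ ^ 2 * y ^ 2) * sq_abs y - 4 * γ * hcube

variable {ν : Measure ℝ}

theorem integrable_abs_sub_mul_sq (h2 : Integrable (fun y => y ^ 2) ν) :
    Integrable (fun y => (|y| - γ * y) ^ 2) ν := by
  have h1 : Integrable (fun y => |y| * y) ν := by simpa using h2.abs_mul_pow (n := 1)
  simp only [abs_sub_mul_sq_eq]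
  exact (h2.const_mul _).sub (h1.const_mul _)

theorem integrable_abs_sub_mul_sq_sq (h4 : Integrable (fun y => y ^ 4) ν) :
    Integrable (fun y => ((|y| - γ * y) ^ 2) ^ 2) ν := by
  simp only [abs_sub_mul_sq_sq_eq]
  exact (h4.const_mul _).sub ((h4.abs_mul_pow (n := 3)).const_mul _)

variable [ν.IsNegInvariant]

theorem integral_abs_sub_mul_sq (h2 : Integrable (fun y => y ^ 2) ν) :
    ∫ y, (|y| - γ * y) ^ 2 ∂ν = (1 + γ ^ 2) * ∫ y, y ^ 2 ∂ν := by
  have h1 : Integrable (fun y => |y| * y) ν := by simpa using h2.abs_mul_pow (n := 1)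
  simp only [abs_sub_mul_sq_eq]
  rw [integral_sub_of_odd ν (h2.const_mul _) (h1.const_mul _) fun y => by simp,
    integral_const_mul]

theorem integral_abs_sub_mul_sq_sq (h4 : Integrable (fun y => y ^ 4) ν) :
    ∫ y, ((|y| - γ * y) ^ 2) ^ 2 ∂ν = (1 + 6 * γ ^ 2 + γ ^ 4) * ∫ y, y ^ 4 ∂ν := by
  simp only [abs_sub_mul_sq_sq_eq]
  rw [integral_sub_of_odd ν (h4.const_mul _) ((h4.abs_mul_pow (n := 3)).const_mul _)
    fun y => by simp; ring, integral_const_mul]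

end AsymmetricPower

theorem laplace_exponent_one_two_general (ν : Measure ℝ)
    (hsym : ν.map (fun y => -y) = ν)
    (h2 : Integrable (fun y => y ^ 2) ν) (h4 : Integrable (fun y => y ^ 4) ν)
    (η φ γ : ℝ)
    (Ψ : ℕ → ℝ)
    (hΨ : ∀ u : ℕ, Ψ u = -η * u + ∫ y, ((1 + φ * (|y| - γ * y) ^ 2) ^ u - 1) ∂ν) :
    Ψ 1 = -η + φ * (1 + γ ^ 2) * ∫ y, y ^ 2 ∂ν ∧
    Ψ 2 = 2 * Ψ 1 + φ ^ 2 * (1 + 6 * γ ^ 2 + γ ^ 4) * ∫ y, y ^ 4 ∂ν := by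
  have : ν.IsNegInvariant := ⟨hsym⟩
  have hΨ1 : Ψ 1 = -η + φ * ∫ y, (|y| - γ * y) ^ 2 ∂ν := by
    simp only [hΨ 1, pow_one, add_sub_cancel_left, integral_const_mul]
    push_cast; ring
  have hΨ2 : Ψ 2 = -η * 2 +
      ∫ y, (2 * φ * (|y| - γ * y) ^ 2 + φ ^ 2 * ((|y| - γ * y) ^ 2) ^ 2) ∂ν := by
    rw [hΨ 2, Nat.cast_ofNat]; congr 2 with y; ring
  rw [integral_add ((integrable_abs_sub_mul_sq γ h2).const_mul _)
      ((integrable_abs_sub_mul_sq_sq γ h4).const_mul _), integral_const_mul, integral_const_mul,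
    integral_abs_sub_mul_sq γ h2, integral_abs_sub_mul_sq_sq γ h4] at hΨ2
  rw [integral_abs_sub_mul_sq γ h2] at hΨ1
  exact ⟨by rw [hΨ1]; ring, by rw [hΨ2, hΨ1]; ring⟩

/-- Lemma 1(b) of the paper, at the level of the Lévy measure: for a symmetric measure `ν`
with finite second and fourth moments and the Laplace exponent
`Ψ(u) = −ηu + ∫ ((1 + φ(|y| − γy)²)^u − 1) ν(dy)`, one has
`Ψ(1) = −η + φ(1 + γ²) ∫ y² ν(dy)` and `Ψ(2) = 2Ψ(1) + φ²(1 + 6γ² + γ⁴) ∫ y⁴ ν(dy)`. -/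
theorem laplace_exponent_one_two (ν : Measure ℝ)
    (hsym : ν.map (fun y => -y) = ν)
    (h2 : Integrable (fun y => y ^ 2) ν) (h4 : Integrable (fun y => y ^ 4) ν)
    (η φ γ : ℝ) (hη : 0 < η) (hφ : 0 < φ)
    (Ψ : ℕ → ℝ)
    (hΨ : ∀ u : ℕ, Ψ u = -η * u + ∫ y, ((1 + φ * (|y| - γ * y) ^ 2) ^ u - 1) ∂ν) :
    Ψ 1 = -η + φ * (1 + γ ^ 2) * ∫ y, y ^ 2 ∂ν ∧
    Ψ 2 = 2 * Ψ 1 + φ ^ 2 * (1 + 6 * γ ^ 2 + γ ^ 4) * ∫ y, y ^ 4 ∂ν :=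
  laplace_exponent_one_two_general ν hsym h2 h4 η φ γ Ψ hΨ
end

section
/- Let ν be a measure on ℝ with ν({0}) = 0 and ∫ min(1, y²) ν(dy) < ∞ (a Lévy measure), let φ > 0, γ ∈ [0, 1), and let u > 0 be a real number. Then the integral ∫ ((1 + φ (|y| − γ y)²)^u − 1) ν(dy) is finite if and only if ∫_{|y| > 1} |y|^{2u} ν(dy) is finite. -/
/-!
The integrand `(1 + φ h(y))^u - 1` is nonnegative and `h(y)` is comparable to `y²` from both
sides, because `γ ∈ [0, 1)`. Near the origin the integrand is therefore `O(y²)`, which the Lévy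
measure integrates. Away from the origin it lies between `c |y|^{2u} - 1` and `C |y|^{2u}`, and
`ν {|y| > 1} < ∞` absorbs the constant.
-/

open MeasureTheory

lemma Real.exp_sub_one_le_mul_exp (t : ℝ) : Real.exp t - 1 ≤ t * Real.exp t := by
  have h : (1 - t) * Real.exp t ≤ Real.exp (-t) * Real.exp t :=
    mul_le_mul_of_nonneg_right (by linarith [Real.add_one_le_exp (-t)]) (Real.exp_pos t).le
  rw [← Real.exp_add, neg_add_cancel, Real.exp_zero] at h
  linarith

lemma Real.one_add_rpow_sub_one_le {x M u : ℝ} (hx : 0 ≤ x) (hxM : x ≤ M) (hu : 0 ≤ u) :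
    (1 + x) ^ u - 1 ≤ u * Real.exp (u * M) * x := by
  have hpow : (1 + x) ^ u ≤ Real.exp (u * x) := by
    rw [Real.rpow_def_of_pos (by linarith), mul_comm]
    gcongr
    linarith [Real.log_le_sub_one_of_pos (show 0 < 1 + x by linarith)]
  have hexp : Real.exp (u * x) ≤ Real.exp (u * M) := by gcongr
  calc (1 + x) ^ u - 1 ≤ u * x * Real.exp (u * x) := by
        linarith [Real.exp_sub_one_le_mul_exp (u * x)]
    _ ≤ u * x * Real.exp (u * M) := by gcongr
    _ = u * Real.exp (u * M) * x := by ring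

lemma abs_rpow_two_mul (y u : ℝ) : |y| ^ (2 * u) = (y ^ 2) ^ u := by
  rw [Real.rpow_mul (abs_nonneg y), Real.rpow_two, sq_abs]

lemma mul_rpow_le_one_add_rpow {a x y u : ℝ} (ha : 0 ≤ a) (hx : a * y ^ 2 ≤ x) (hu : 0 ≤ u) :
    a ^ u * |y| ^ (2 * u) ≤ (1 + x) ^ u := by
  rw [abs_rpow_two_mul, ← Real.mul_rpow ha (sq_nonneg y)]
  exact Real.rpow_le_rpow (by positivity) (by linarith) hu

lemma one_add_rpow_le_mul_rpow {b x y u : ℝ} (hx₀ : 0 ≤ x) (hx : x ≤ b * y ^ 2) (hy : 1 ≤ |y|)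
    (hu : 0 ≤ u) : (1 + x) ^ u ≤ (1 + b) ^ u * |y| ^ (2 * u) := by
  have hy2 : 1 ≤ y ^ 2 := one_le_sq_iff_one_le_abs y |>.2 hy
  have hb : 0 ≤ b := nonneg_of_mul_nonneg_left (hx₀.trans hx) (by positivity)
  rw [abs_rpow_two_mul, ← Real.mul_rpow (by positivity) (sq_nonneg y)]
  exact Real.rpow_le_rpow (by positivity) (by nlinarith) hu

lemma one_add_rpow_sub_one_le_mul_sq {b x y u : ℝ} (hb : 0 ≤ b) (hx₀ : 0 ≤ x)
    (hx : x ≤ b * y ^ 2) (hy : |y| ≤ 1) (hu : 0 ≤ u) :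
    (1 + x) ^ u - 1 ≤ u * Real.exp (u * b) * b * y ^ 2 := by
  have hy2 : y ^ 2 ≤ 1 := (sq_le_one_iff_abs_le_one y).2 hy
  have hK : 0 ≤ u * Real.exp (u * b) := by positivity
  calc (1 + x) ^ u - 1 ≤ u * Real.exp (u * b) * x :=
        Real.one_add_rpow_sub_one_le hx₀ (by nlinarith) hu
    _ ≤ u * Real.exp (u * b) * (b * y ^ 2) := mul_le_mul_of_nonneg_left hx hK
    _ = u * Real.exp (u * b) * b * y ^ 2 := by ring

section AsymmetricPower

variable {γ : ℝ} (y : ℝ)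

lemma sq_mul_sq_le_sq_abs_sub_mul (hγ : |γ| ≤ 1) : (1 - |γ|) ^ 2 * y ^ 2 ≤ (|y| - γ * y) ^ 2 := by
  have hγy : γ * y ≤ |γ| * |y| := (le_abs_self _).trans (abs_mul γ y).le
  rw [← sq_abs y, ← mul_pow]
  exact pow_le_pow_left₀ (mul_nonneg (by linarith) (abs_nonneg y)) (by linarith) 2

lemma sq_abs_sub_mul_le (hγ : |γ| ≤ 1) : (|y| - γ * y) ^ 2 ≤ 4 * y ^ 2 := by
  have hγy : |γ * y| ≤ |y| := by
    rw [abs_mul]; exact mul_le_of_le_one_left (abs_nonneg y) hγ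
  have : |(|y| - γ * y)| ≤ |2 * y| := by
    rw [abs_mul, abs_two]
    exact (abs_sub _ _).trans (by rw [abs_abs]; linarith)
  nlinarith [sq_le_sq.2 this]

end AsymmetricPower

lemma measure_one_lt_abs_lt_top {ν : Measure ℝ}
    (hlevy : ∫⁻ y, ENNReal.ofReal (min 1 (y ^ 2)) ∂ν < ⊤) : ν {y : ℝ | 1 < |y|} < ⊤ := by
  calc ν {y : ℝ | 1 < |y|}
      ≤ ν {y | 1 ≤ ENNReal.ofReal (min 1 (y ^ 2))} := measure_mono fun y (hy : 1 < |y|) => by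
        simpa using hy.le
    _ ≤ ∫⁻ y, ENNReal.ofReal (min 1 (y ^ 2)) ∂ν := by
        simpa only [one_mul] using mul_meas_ge_le_lintegral₀ (μ := ν)
          (f := fun y => ENNReal.ofReal (min 1 (y ^ 2))) (by fun_prop) 1
    _ < ⊤ := hlevy

lemma setLIntegral_abs_le_one_lt_top {ν : Measure ℝ}
    (hlevy : ∫⁻ y, ENNReal.ofReal (min 1 (y ^ 2)) ∂ν < ⊤) {f : ℝ → ℝ} {C : ℝ}
    (hf : ∀ y, |y| ≤ 1 → f y ≤ C * y ^ 2) :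
    ∫⁻ y in {y : ℝ | 1 < |y|}ᶜ, ENNReal.ofReal (f y) ∂ν < ⊤ := by
  have hA : MeasurableSet {y : ℝ | 1 < |y|} := measurableSet_lt measurable_const measurable_abs
  calc ∫⁻ y in {y : ℝ | 1 < |y|}ᶜ, ENNReal.ofReal (f y) ∂ν
      ≤ ∫⁻ y in {y : ℝ | 1 < |y|}ᶜ, ENNReal.ofReal C * ENNReal.ofReal (min 1 (y ^ 2)) ∂ν := by
        refine setLIntegral_mono' hA.compl fun y hy => ?_
        have hy : |y| ≤ 1 := not_lt.1 hy
        rw [min_eq_right ((sq_le_one_iff_abs_le_one y).2 hy), ← ENNReal.ofReal_mul' (sq_nonneg y)]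
        exact ENNReal.ofReal_le_ofReal (hf y hy)
    _ ≤ ENNReal.ofReal C * ∫⁻ y, ENNReal.ofReal (min 1 (y ^ 2)) ∂ν := by
        rw [lintegral_const_mul' _ _ ENNReal.ofReal_ne_top]
        gcongr
        exact Measure.restrict_le_self
    _ < ⊤ := ENNReal.mul_lt_top ENNReal.ofReal_lt_top hlevy

lemma lintegral_lt_top_iff_setLIntegral_lt_top {α : Type*} [MeasurableSpace α] {μ : Measure α}
    {s : Set α} (hs : MeasurableSet s) {f : α → ENNReal} (hf : ∫⁻ x in sᶜ, f x ∂μ < ⊤) :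
    ∫⁻ x, f x ∂μ < ⊤ ↔ ∫⁻ x in s, f x ∂μ < ⊤ := by
  rw [← lintegral_add_compl f hs, ENNReal.add_lt_top]
  exact and_iff_left hf

lemma setLIntegral_ofReal_lt_top_iff_of_bounds {α : Type*} [MeasurableSpace α] {μ : Measure α}
    {s : Set α} (hs : MeasurableSet s) (hμs : μ s < ⊤) {f g : α → ℝ} {c C : ℝ} (hc : 0 < c)
    (hC : 0 ≤ C) (hlow : ∀ x ∈ s, c * g x ≤ f x + 1) (hup : ∀ x ∈ s, f x ≤ C * g x) :
    ∫⁻ x in s, ENNReal.ofReal (f x) ∂μ < ⊤ ↔ ∫⁻ x in s, ENNReal.ofReal (g x) ∂μ < ⊤ := by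
  constructor
  · intro hf
    have hcg : ENNReal.ofReal c * ∫⁻ x in s, ENNReal.ofReal (g x) ∂μ
        ≤ ∫⁻ x in s, ENNReal.ofReal (f x) ∂μ + μ s := by
      rw [← lintegral_const_mul' _ _ ENNReal.ofReal_ne_top, ← setLIntegral_one,
        ← lintegral_add_right _ measurable_const]
      refine setLIntegral_mono' hs fun x hx => ?_
      rw [← ENNReal.ofReal_mul hc.le, ← ENNReal.ofReal_one]
      exact (ENNReal.ofReal_le_ofReal (hlow x hx)).trans ENNReal.ofReal_add_le
    refine ENNReal.lt_top_of_mul_ne_top_right ?_ (ENNReal.ofReal_pos.2 hc).ne'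
    exact (hcg.trans_lt (ENNReal.add_lt_top.2 ⟨hf, hμs⟩)).ne
  · intro hg
    calc ∫⁻ x in s, ENNReal.ofReal (f x) ∂μ
        ≤ ∫⁻ x in s, ENNReal.ofReal C * ENNReal.ofReal (g x) ∂μ :=
          setLIntegral_mono' hs fun x hx => by
            rw [← ENNReal.ofReal_mul hC]; exact ENNReal.ofReal_le_ofReal (hup x hx)
      _ = ENNReal.ofReal C * ∫⁻ x in s, ENNReal.ofReal (g x) ∂μ :=
          lintegral_const_mul' _ _ ENNReal.ofReal_ne_top
      _ < ⊤ := ENNReal.mul_lt_top ENNReal.ofReal_lt_top hg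

theorem laplace_exponent_finite_iff_general (ν : Measure ℝ)
    (hlevy : ∫⁻ y, ENNReal.ofReal (min 1 (y ^ 2)) ∂ν < ⊤)
    (φ γ u : ℝ) (hφ : 0 < φ) (hγ : γ ∈ Set.Ico (0 : ℝ) 1) (hu : 0 < u) :
    (∫⁻ y, ENNReal.ofReal ((1 + φ * (|y| - γ * y) ^ 2) ^ u - 1) ∂ν < ⊤) ↔
      (∫⁻ y in {y : ℝ | 1 < |y|}, ENNReal.ofReal (|y| ^ (2 * u)) ∂ν < ⊤) := by
  have hγ' : |γ| < 1 := abs_lt.2 ⟨by linarith [hγ.1], hγ.2⟩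
  have hA : MeasurableSet {y : ℝ | 1 < |y|} := measurableSet_lt measurable_const measurable_abs
  have hx₀ (y : ℝ) : 0 ≤ φ * (|y| - γ * y) ^ 2 := by positivity
  have hx_upper (y : ℝ) : φ * (|y| - γ * y) ^ 2 ≤ 4 * φ * y ^ 2 := by
    rw [mul_assoc, mul_left_comm]
    exact mul_le_mul_of_nonneg_left (sq_abs_sub_mul_le y hγ'.le) hφ.le
  have hx_lower (y : ℝ) : φ * (1 - |γ|) ^ 2 * y ^ 2 ≤ φ * (|y| - γ * y) ^ 2 := by
    rw [mul_assoc]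
    exact mul_le_mul_of_nonneg_left (sq_mul_sq_le_sq_abs_sub_mul y hγ'.le) hφ.le
  have hc : 0 < (φ * (1 - |γ|) ^ 2) ^ u :=
    Real.rpow_pos_of_pos (mul_pos hφ (pow_pos (sub_pos.2 hγ') 2)) u
  rw [lintegral_lt_top_iff_setLIntegral_lt_top hA <| setLIntegral_abs_le_one_lt_top hlevy
    fun y hy => one_add_rpow_sub_one_le_mul_sq (by positivity) (hx₀ y) (hx_upper y) hy hu.le]
  refine setLIntegral_ofReal_lt_top_iff_of_bounds hA (measure_one_lt_abs_lt_top hlevy) hc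
    (by positivity : 0 ≤ (1 + 4 * φ) ^ u) (fun y _ => ?_) (fun y hy => ?_)
  · rw [sub_add_cancel]
    exact mul_rpow_le_one_add_rpow (by positivity) (hx_lower y) hu.le
  · linarith [one_add_rpow_le_mul_rpow (hx₀ y) (hx_upper y) (le_of_lt hy) hu.le]

/-- Finiteness criterion for the Laplace exponent of the GJR-COGARCH (Lemma 1(a)):
for a Lévy measure `ν`, `φ > 0`, `γ ∈ [0,1)` and real `u > 0`, the integral
`∫ ((1 + φ(|y| − γy)²)^u − 1) ν(dy)` is finite iff `∫_{|y|>1} |y|^{2u} ν(dy)` is finite. -/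
theorem laplace_exponent_finite_iff (ν : Measure ℝ)
    (h0 : ν {0} = 0)
    (hlevy : ∫⁻ y, ENNReal.ofReal (min 1 (y ^ 2)) ∂ν < ⊤)
    (φ γ u : ℝ) (hφ : 0 < φ) (hγ : γ ∈ Set.Ico (0 : ℝ) 1) (hu : 0 < u) :
    (∫⁻ y, ENNReal.ofReal ((1 + φ * (|y| - γ * y) ^ 2) ^ u - 1) ∂ν < ⊤) ↔
      (∫⁻ y in {y : ℝ | 1 < |y|}, ENNReal.ofReal (|y| ^ (2 * u)) ∂ν < ⊤) :=
  laplace_exponent_finite_iff_general ν hlevy φ γ u hφ hγ hu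
end

section
/- Let ν be a nonzero symmetric measure on ℝ with ν({0}) = 0 and ∫ y² ν(dy) < ∞, let η, φ > 0 and γ ∈ [0, 1). If −η + φ (1 + γ²) ∫ y² ν(dy) ≤ 0 (i.e. Ψ(1) ≤ 0 for the GJR-COGARCH), then also ∫ log(1 + φ y²) ν(dy) < η, i.e. the stationarity condition for the corresponding symmetric COGARCH (the case γ = 0) holds as well. -/
open MeasureTheory

/-! Since `log (1 + x) < x` for `x > 0`, the integrand `log (1 + φ y²)` lies strictly below
`φ y²` off the `ν`-null point `0`, and `ν` is not carried by `{0}`; hence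
`∫ log (1 + φ y²) dν < φ ∫ y² dν ≤ φ (1 + γ²) ∫ y² dν ≤ η`. -/

theorem Real.log_one_add_le_self {x : ℝ} (hx : 0 ≤ x) : Real.log (1 + x) ≤ x := by
  linarith [Real.log_le_sub_one_of_pos (by positivity : (0 : ℝ) < 1 + x)]

theorem Real.log_one_add_lt_self {x : ℝ} (hx : 0 < x) : Real.log (1 + x) < x := by
  linarith [Real.log_lt_sub_one_of_pos (by positivity : (0 : ℝ) < 1 + x) (by linarith)]

theorem integral_lt_integral_of_ae_le_of_measure_setOf_lt_ne_zero {α : Type*}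
    [MeasurableSpace α] {μ : Measure α} {f g : α → ℝ} (hf : Integrable f μ)
    (hg : Integrable g μ) (hle : f ≤ᵐ[μ] g) (hlt : μ {x | f x < g x} ≠ 0) :
    ∫ x, f x ∂μ < ∫ x, g x ∂μ := by
  rw [← sub_pos, ← integral_sub hg hf, integral_pos_iff_support_of_nonneg_ae
    (hle.mono fun _ => sub_nonneg.2) (hg.sub hf)]
  exact pos_iff_ne_zero.2 (mt (measure_mono_null fun x hx => (sub_pos.2 hx).ne') hlt)

theorem MeasureTheory.Integrable.log_one_add {α : Type*} [MeasurableSpace α] {μ : Measure α}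
    {g : α → ℝ} (hg : Integrable g μ) (hg0 : 0 ≤ g) :
    Integrable (fun x => Real.log (1 + g x)) μ := by
  refine hg.mono' (Real.measurable_log.comp_aemeasurable
    (hg.aemeasurable.const_add 1)).aestronglyMeasurable (ae_of_all _ fun x => ?_)
  rw [Real.norm_of_nonneg (Real.log_nonneg (le_add_of_nonneg_right (hg0 x)))]
  exact Real.log_one_add_le_self (hg0 x)

theorem measure_compl_ne_zero_of_measure_eq_zero {α : Type*} [MeasurableSpace α]
    {μ : Measure α} (hμ : μ ≠ 0) {s : Set α} (hs : μ s = 0) : μ sᶜ ≠ 0 := fun hsc =>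
  hμ (Measure.measure_univ_eq_zero.mp (by simpa using measure_union_null hs hsc))

theorem symmetric_stationarity_of_psi_one_nonpos_general (ν : Measure ℝ) (hν : ν ≠ 0)
    (h0 : ν {0} = 0)
    (h2 : Integrable (fun y => y ^ 2) ν)
    (η φ γ : ℝ) (hφ : 0 < φ)
    (hΨ1 : -η + φ * (1 + γ ^ 2) * ∫ y, y ^ 2 ∂ν ≤ 0) :
    ∫ y, Real.log (1 + φ * y ^ 2) ∂ν < η := by
  have hφy2 : Integrable (fun y => φ * y ^ 2) ν := h2.const_mul φ
  have hlt_off_zero : {0}ᶜ ⊆ {y : ℝ | Real.log (1 + φ * y ^ 2) < φ * y ^ 2} := fun y hy =>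
    Real.log_one_add_lt_self (by positivity [Set.mem_compl_singleton_iff.mp hy])
  have hI : 0 ≤ ∫ y, y ^ 2 ∂ν := integral_nonneg fun y => sq_nonneg y
  calc ∫ y, Real.log (1 + φ * y ^ 2) ∂ν < ∫ y, φ * y ^ 2 ∂ν :=
        integral_lt_integral_of_ae_le_of_measure_setOf_lt_ne_zero
          (hφy2.log_one_add fun y => by positivity) hφy2
          (ae_of_all _ fun y => Real.log_one_add_le_self (by positivity))
          (fun h => measure_compl_ne_zero_of_measure_eq_zero hν h0
            (measure_mono_null hlt_off_zero h))
    _ = φ * ∫ y, y ^ 2 ∂ν := integral_const_mul φ _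
    _ ≤ η := by nlinarith [mul_nonneg (mul_nonneg hφ.le (sq_nonneg γ)) hI]

/-- Proposition 2(c), second claim: for a nonzero symmetric measure `ν` with `ν({0}) = 0`
and finite second moment, `η, φ > 0`, `γ ∈ [0,1)`, if `Ψ(1) = −η + φ(1+γ²)∫ y² ν(dy) ≤ 0`
for the GJR-COGARCH, then the stationarity condition of the corresponding symmetric
COGARCH (the case `γ = 0`) holds as well: `∫ log(1 + φ y²) ν(dy) < η`. -/
theorem symmetric_stationarity_of_psi_one_nonpos (ν : Measure ℝ) (hν : ν ≠ 0)
    (hsym : ν.map (fun y => -y) = ν) (h0 : ν {0} = 0)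
    (h2 : Integrable (fun y => y ^ 2) ν)
    (η φ γ : ℝ) (hη : 0 < η) (hφ : 0 < φ) (hγ : γ ∈ Set.Ico (0 : ℝ) 1)
    (hΨ1 : -η + φ * (1 + γ ^ 2) * ∫ y, y ^ 2 ∂ν ≤ 0) :
    ∫ y, Real.log (1 + φ * y ^ 2) ∂ν < η :=
  symmetric_stationarity_of_psi_one_nonpos_general ν hν h0 h2 η φ γ hφ hΨ1
end

section
/- In the GJR-COGARCH method-of-moments setting (Δ, S > 0; θ, η, φ > 0; γ ∈ [0,1); γ̃ = 1 + γ²; H = γ̃² + 4γ̃ − 4; p = η − φγ̃ > 0; q = 2p − φ²HS > 0; μ = θΔ/p; E = (1 − e^{−Δp})(e^{Δp} − 1); Γ and k as defined), the quantity M₁ := Γ − (6kΓ/E)(pΔ − 1 + e^{−Δp}) − 2μ² satisfies M₁ = 2θ²ΔS/(pq); in particular M₁ > 0. -/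
/-!
The `k`-term of `M₁` is `(6θ²/p³)(2η/φ − γ̃)(2/q − 1/p)(pΔ − 1 + e^{−Δp})`, once the factors
`Γ` and `E` hidden in `k` cancel, and this is exactly the first summand of `Γ`. The last summand
of `Γ` is `2μ²`, so `M₁ = 2(θ²/φ²)(2/q − 1/p)H⁻¹Δ`, and `2/q − 1/p = (2p − q)/(pq) = φ²HS/(pq)`.
Cancelling `Γ` and `E` needs both to be nonzero, which is where positivity of the parameters enters.
-/

open Real

lemma one_sub_exp_neg_mul_exp_sub_one_pos {x : ℝ} (hx : 0 < x) :
    0 < (1 - exp (-x)) * (exp x - 1) := by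
  have h₁ : exp (-x) < 1 := exp_lt_one_iff.mpr (neg_lt_zero.mpr hx)
  have h₂ : 1 < exp x := one_lt_exp_iff.mpr hx
  exact mul_pos (by linarith) (by linarith)

lemma one_sub_exp_neg_mul_div_le {p : ℝ} (hp : 0 < p) (Δ : ℝ) :
    (1 - exp (-Δ * p)) / p ≤ Δ := by
  rw [div_le_iff₀ hp, neg_mul]
  linarith [one_sub_le_exp_neg (Δ * p)]

lemma two_div_sub_one_div {p q : ℝ} (hp : p ≠ 0) (hq : q ≠ 0) :
    2 / q - 1 / p = (2 * p - q) / (p * q) := by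
  field_simp

lemma gjr_H_pos {γt : ℝ} (hγt : 1 ≤ γt) : 0 < γt ^ 2 + 4 * γt - 4 := by
  nlinarith

lemma gjr_two_mul_div_sub_pos {η φ γt : ℝ} (hφ : 0 < φ) (hγt : 0 ≤ γt)
    (hp : 0 < η - φ * γt) : 0 < 2 * η / φ - γt := by
  have : 2 * η / φ - γt = (2 * (η - φ * γt) + φ * γt) / φ := by field_simp; ring
  rw [this]
  positivity

lemma gjr_variance_pos {θ φ Δ p A B H T : ℝ} (hθ : θ ≠ 0) (hΔ : 0 < Δ) (hp : p ≠ 0)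
    (hA : 0 ≤ A) (hB : 0 ≤ B) (hH : 0 ≤ H) (hT : 0 ≤ T) :
    0 < 6 * (θ ^ 2 / p ^ 2) * A * B * T + 2 * (θ ^ 2 / φ ^ 2) * B * H⁻¹ * Δ
      + 2 * (θ ^ 2 / p ^ 2) * Δ ^ 2 := by
  positivity

theorem mom_M1_formula_general
    (Δ S θ η φ γ γt H p q μ E Γ k : ℝ)
    (hΔ : 0 < Δ) (hS : 0 < S) (hθ : 0 < θ) (hφ : 0 < φ)
    (hγt : γt = 1 + γ ^ 2) (hH : H = γt ^ 2 + 4 * γt - 4)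
    (hp : p = η - φ * γt) (hp0 : 0 < p)
    (hq : q = 2 * p - φ ^ 2 * H * S) (hq0 : 0 < q)
    (hμ : μ = θ * Δ / p)
    (hE : E = (1 - Real.exp (-Δ * p)) * (Real.exp (Δ * p) - 1))
    (hΓ : Γ = 6 * (θ ^ 2 / p ^ 2) * (2 * η / φ - γt) * (2 / q - 1 / p)
            * (Δ - (1 - Real.exp (-Δ * p)) / p)
          + 2 * (θ ^ 2 / φ ^ 2) * (2 / q - 1 / p) * H⁻¹ * Δ
          + 2 * (θ ^ 2 / p ^ 2) * Δ ^ 2)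
    (hk : k = (θ ^ 2 / (Γ * p ^ 3)) * (2 * η / φ - γt) * (2 / q - 1 / p) * E)
    (M₁ : ℝ)
    (hM1 : M₁ = Γ - (6 * k * Γ / E) * (p * Δ - 1 + Real.exp (-Δ * p)) - 2 * μ ^ 2) :
    M₁ = 2 * θ ^ 2 * Δ * S / (p * q) ∧ 0 < M₁ := by
  have hγt1 : 1 ≤ γt := by rw [hγt]; linarith [sq_nonneg γ]
  have hH0 : 0 < H := hH ▸ gjr_H_pos hγt1
  have hA : 0 < 2 * η / φ - γt := gjr_two_mul_div_sub_pos hφ (by linarith) (hp ▸ hp0)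
  have hB : 2 / q - 1 / p = φ ^ 2 * H * S / (p * q) := by
    rw [two_div_sub_one_div hp0.ne' hq0.ne', hq]
    ring_nf
  have hB0 : 0 < 2 / q - 1 / p := by
    rw [hB]
    positivity
  have hE0 : 0 < E := by
    rw [hE, neg_mul]
    exact one_sub_exp_neg_mul_exp_sub_one_pos (mul_pos hΔ hp0)
  have hΓ0 : 0 < Γ := hΓ ▸ gjr_variance_pos hθ.ne' hΔ hp0.ne' hA.le hB0.le
    hH0.le (sub_nonneg.2 (one_sub_exp_neg_mul_div_le hp0 Δ))
  have hkΓ : 6 * k * Γ / E * (p * Δ - 1 + exp (-Δ * p)) = 6 * (θ ^ 2 / p ^ 2)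
      * (2 * η / φ - γt) * (2 / q - 1 / p) * (Δ - (1 - exp (-Δ * p)) / p) := by
    rw [hk]
    field_simp
    ring
  have hM : M₁ = 2 * θ ^ 2 * Δ * S / (p * q) := by
    rw [hM1, hkΓ, hΓ, hμ, hB]
    field_simp
    ring
  exact ⟨hM, hM ▸ by positivity⟩

/-- In the GJR-COGARCH method-of-moments setting, the quantity
`M₁ = Γ − (6kΓ/E)(pΔ − 1 + e^{−Δp}) − 2μ²` satisfies `M₁ = 2θ²ΔS/(pq)`;
in particular `M₁ > 0`. -/
theorem mom_M1_formula
    (Δ S θ η φ γ γt H p q μ E Γ k : ℝ)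
    (hΔ : 0 < Δ) (hS : 0 < S) (hθ : 0 < θ) (hη : 0 < η) (hφ : 0 < φ)
    (hγ : γ ∈ Set.Ico (0 : ℝ) 1)
    (hγt : γt = 1 + γ ^ 2) (hH : H = γt ^ 2 + 4 * γt - 4)
    (hp : p = η - φ * γt) (hp0 : 0 < p)
    (hq : q = 2 * p - φ ^ 2 * H * S) (hq0 : 0 < q)
    (hμ : μ = θ * Δ / p)
    (hE : E = (1 - Real.exp (-Δ * p)) * (Real.exp (Δ * p) - 1))
    (hΓ : Γ = 6 * (θ ^ 2 / p ^ 2) * (2 * η / φ - γt) * (2 / q - 1 / p)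
            * (Δ - (1 - Real.exp (-Δ * p)) / p)
          + 2 * (θ ^ 2 / φ ^ 2) * (2 / q - 1 / p) * H⁻¹ * Δ
          + 2 * (θ ^ 2 / p ^ 2) * Δ ^ 2)
    (hk : k = (θ ^ 2 / (Γ * p ^ 3)) * (2 * η / φ - γt) * (2 / q - 1 / p) * E)
    (M₁ : ℝ)
    (hM1 : M₁ = Γ - (6 * k * Γ / E) * (p * Δ - 1 + Real.exp (-Δ * p)) - 2 * μ ^ 2) :
    M₁ = 2 * θ ^ 2 * Δ * S / (p * q) ∧ 0 < M₁ :=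
  mom_M1_formula_general Δ S θ η φ γ γt H p q μ E Γ k hΔ hS hθ hφ hγt hH hp hp0 hq hq0 hμ hE hΓ hk
    M₁ hM1
end

section
/- In the GJR-COGARCH method-of-moments setting (Δ, S > 0; θ, η, φ > 0; γ ∈ [0,1); γ̃ = 1 + γ²; H = γ̃² + 4γ̃ − 4; p = η − φγ̃ > 0; q = 2p − φ²HS > 0; μ = θΔ/p; E = (1 − e^{−Δp})(e^{Δp} − 1); Γ, k, M₁ as defined), the quantity M₂ := 1 − μ²S/(ΔM₁) satisfies M₂ = φ²HS/(2p); in particular M₂ > 0. -/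
/-! After the substitution `k Γ / E = (θ² / p³) (2η/φ − γ̃) (2/q − 1/p)`, the first and last terms
of `Γ` cancel against the two subtracted terms of `M₁`, so `M₁` is the middle term of `Γ`. Since
`2/q − 1/p = φ²HS/(pq)`, this is `M₁ = 2θ²SΔ/(pq)`, hence `μ²S/(ΔM₁) = q/(2p)` and
`M₂ = (2p − q)/(2p) = φ²HS/(2p)`. -/

open Real

lemma one_le_sq_add_four_mul_sub_four {x : ℝ} (hx : 1 ≤ x) : 1 ≤ x ^ 2 + 4 * x - 4 := by
  nlinarith

lemma two_div_sub_one_div_of_eq_two_mul_sub {p q c : ℝ} (hp : p ≠ 0) (hq : q ≠ 0)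
    (h : q = 2 * p - c) : 2 / q - 1 / p = c / (p * q) := by
  subst h
  field_simp
  ring

lemma one_sub_exp_neg_mul_exp_sub_one_ne_zero {x : ℝ} (hx : x ≠ 0) :
    (1 - exp (-x)) * (exp x - 1) ≠ 0 :=
  mul_ne_zero (sub_ne_zero.mpr fun h => hx (neg_eq_zero.mp (exp_eq_one_iff _ |>.mp h.symm)))
    (sub_ne_zero.mpr fun h => hx (exp_eq_one_iff _ |>.mp h))

section GJRCOGARCH

variable {Δ S θ η φ γt H p q μ E Γ k M₁ M₂ : ℝ}

lemma gjr_Gamma_pos (hΔ : 0 < Δ) (hθ : θ ≠ 0) (hφ : 0 < φ) (hγt : 0 ≤ γt) (hH : 0 < H)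
    (hp : p = η - φ * γt) (hp0 : 0 < p) (hB : 0 < 2 / q - 1 / p)
    (hΓ : Γ = 6 * (θ ^ 2 / p ^ 2) * (2 * η / φ - γt) * (2 / q - 1 / p)
            * (Δ - (1 - exp (-Δ * p)) / p)
          + 2 * (θ ^ 2 / φ ^ 2) * (2 / q - 1 / p) * H⁻¹ * Δ
          + 2 * (θ ^ 2 / p ^ 2) * Δ ^ 2) :
    0 < Γ := by
  have hA : 0 ≤ 2 * η / φ - γt := by
    rw [show 2 * η / φ - γt = (2 * p + φ * γt) / φ by rw [hp]; field_simp; ring]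
    positivity
  have hT : 0 ≤ Δ - (1 - exp (-Δ * p)) / p := by
    rw [sub_nonneg, div_le_iff₀ hp0]
    linarith [add_one_le_exp (-Δ * p)]
  rw [hΓ]
  positivity

lemma gjr_M1_eq (hp : p ≠ 0) (hE : E ≠ 0) (hΓ0 : Γ ≠ 0)
    (hμ : μ = θ * Δ / p)
    (hΓ : Γ = 6 * (θ ^ 2 / p ^ 2) * (2 * η / φ - γt) * (2 / q - 1 / p)
            * (Δ - (1 - exp (-Δ * p)) / p)
          + 2 * (θ ^ 2 / φ ^ 2) * (2 / q - 1 / p) * H⁻¹ * Δ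
          + 2 * (θ ^ 2 / p ^ 2) * Δ ^ 2)
    (hk : k = (θ ^ 2 / (Γ * p ^ 3)) * (2 * η / φ - γt) * (2 / q - 1 / p) * E)
    (hM1 : M₁ = Γ - (6 * k * Γ / E) * (p * Δ - 1 + exp (-Δ * p)) - 2 * μ ^ 2) :
    M₁ = 2 * (θ ^ 2 / φ ^ 2) * (2 / q - 1 / p) * H⁻¹ * Δ := by
  have hkΓ : 6 * k * Γ / E = 6 * (θ ^ 2 / p ^ 3) * (2 * η / φ - γt) * (2 / q - 1 / p) := by
    rw [hk]
    field_simp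
  rw [hM1, hkΓ]
  nth_rw 1 [hΓ]
  rw [hμ]
  field_simp
  ring

lemma gjr_M2_eq (hΔ : Δ ≠ 0) (hS : S ≠ 0) (hθ : θ ≠ 0) (hφ : φ ≠ 0) (hH : H ≠ 0)
    (hp : p ≠ 0) (hq0 : q ≠ 0) (hq : q = 2 * p - φ ^ 2 * H * S)
    (hμ : μ = θ * Δ / p)
    (hM1 : M₁ = 2 * (θ ^ 2 / φ ^ 2) * (φ ^ 2 * H * S / (p * q)) * H⁻¹ * Δ)
    (hM2 : M₂ = 1 - μ ^ 2 * S / (Δ * M₁)) :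
    M₂ = φ ^ 2 * H * S / (2 * p) := by
  have hM1' : M₁ = 2 * θ ^ 2 * S * Δ / (p * q) := by
    rw [hM1]
    field_simp
  rw [hM2, hM1', hμ]
  field_simp
  rw [hq]
  ring

end GJRCOGARCH

theorem mom_M2_formula_general
    (Δ S θ η φ γ γt H p q μ E Γ k : ℝ)
    (hΔ : 0 < Δ) (hS : 0 < S) (hθ : 0 < θ) (hφ : 0 < φ)
    (hγt : γt = 1 + γ ^ 2) (hH : H = γt ^ 2 + 4 * γt - 4)
    (hp : p = η - φ * γt) (hp0 : 0 < p)
    (hq : q = 2 * p - φ ^ 2 * H * S) (hq0 : 0 < q)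
    (hμ : μ = θ * Δ / p)
    (hE : E = (1 - Real.exp (-Δ * p)) * (Real.exp (Δ * p) - 1))
    (hΓ : Γ = 6 * (θ ^ 2 / p ^ 2) * (2 * η / φ - γt) * (2 / q - 1 / p)
            * (Δ - (1 - Real.exp (-Δ * p)) / p)
          + 2 * (θ ^ 2 / φ ^ 2) * (2 / q - 1 / p) * H⁻¹ * Δ
          + 2 * (θ ^ 2 / p ^ 2) * Δ ^ 2)
    (hk : k = (θ ^ 2 / (Γ * p ^ 3)) * (2 * η / φ - γt) * (2 / q - 1 / p) * E)
    (M₁ M₂ : ℝ)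
    (hM1 : M₁ = Γ - (6 * k * Γ / E) * (p * Δ - 1 + Real.exp (-Δ * p)) - 2 * μ ^ 2)
    (hM2 : M₂ = 1 - μ ^ 2 * S / (Δ * M₁)) :
    M₂ = φ ^ 2 * H * S / (2 * p) ∧ 0 < M₂ := by
  have hγt1 : 1 ≤ γt := by rw [hγt]; nlinarith [sq_nonneg γ]
  have hH0 : 0 < H := by rw [hH]; linarith [one_le_sq_add_four_mul_sub_four hγt1]
  have hB : 2 / q - 1 / p = φ ^ 2 * H * S / (p * q) :=
    two_div_sub_one_div_of_eq_two_mul_sub hp0.ne' hq0.ne' hq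
  have hΓ0 : 0 < Γ :=
    gjr_Gamma_pos hΔ hθ.ne' hφ (by linarith) hH0 hp hp0 (hB ▸ by positivity) hΓ
  have hE0 : E ≠ 0 := by
    rw [hE, neg_mul]
    exact one_sub_exp_neg_mul_exp_sub_one_ne_zero (mul_pos hΔ hp0).ne'
  have hM1' := gjr_M1_eq hp0.ne' hE0 hΓ0.ne' hμ hΓ hk hM1
  rw [hB] at hM1'
  have hM2' := gjr_M2_eq hΔ.ne' hS.ne' hθ.ne' hφ.ne' hH0.ne' hp0.ne' hq0.ne' hq hμ hM1' hM2
  exact ⟨hM2', hM2' ▸ by positivity⟩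

/-- In the GJR-COGARCH method-of-moments setting, the quantity `M₂ = 1 − μ²S/(ΔM₁)`
satisfies `M₂ = φ²HS/(2p)`; in particular `M₂ > 0`. -/
theorem mom_M2_formula
    (Δ S θ η φ γ γt H p q μ E Γ k : ℝ)
    (hΔ : 0 < Δ) (hS : 0 < S) (hθ : 0 < θ) (hη : 0 < η) (hφ : 0 < φ)
    (hγ : γ ∈ Set.Ico (0 : ℝ) 1)
    (hγt : γt = 1 + γ ^ 2) (hH : H = γt ^ 2 + 4 * γt - 4)
    (hp : p = η - φ * γt) (hp0 : 0 < p)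
    (hq : q = 2 * p - φ ^ 2 * H * S) (hq0 : 0 < q)
    (hμ : μ = θ * Δ / p)
    (hE : E = (1 - Real.exp (-Δ * p)) * (Real.exp (Δ * p) - 1))
    (hΓ : Γ = 6 * (θ ^ 2 / p ^ 2) * (2 * η / φ - γt) * (2 / q - 1 / p)
            * (Δ - (1 - Real.exp (-Δ * p)) / p)
          + 2 * (θ ^ 2 / φ ^ 2) * (2 / q - 1 / p) * H⁻¹ * Δ
          + 2 * (θ ^ 2 / p ^ 2) * Δ ^ 2)
    (hk : k = (θ ^ 2 / (Γ * p ^ 3)) * (2 * η / φ - γt) * (2 / q - 1 / p) * E)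
    (M₁ M₂ : ℝ)
    (hM1 : M₁ = Γ - (6 * k * Γ / E) * (p * Δ - 1 + Real.exp (-Δ * p)) - 2 * μ ^ 2)
    (hM2 : M₂ = 1 - μ ^ 2 * S / (Δ * M₁)) :
    M₂ = φ ^ 2 * H * S / (2 * p) ∧ 0 < M₂ :=
  mom_M2_formula_general Δ S θ η φ γ γt H p q μ E Γ k hΔ hS hθ hφ hγt hH hp hp0 hq hq0 hμ hE hΓ hk
    M₁ M₂ hM1 hM2
end
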